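/- arXiv:2510.20311 — 2 statements merged into one kernel-verified Lean document; each statement's English description precedes it below -/
import Mathlib

section
/- For an ensemble E with maximum confidence C_x and Π_x^⊥ the projection onto the kernel of C_x ρ₀ − η_x ρ_x, the dual cone M_x*(E) = {E Hermitian : Tr(EF) ≥ 0 for all F ∈ M_x(E)} equals {E Hermitian : Π_x^⊥ E Π_x^⊥ ⪰ 0}, where M_x(E) = {F ⪰ 0 : Tr[(C_x ρ₀ − η_x ρ_x) F] = 0}. -/
/-!
For `A ⪰ 0`, the condition `Tr(AF) = 0` on `F ⪰ 0` forces `AF = 0`, so the cone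
`{F ⪰ 0 : Tr(AF) = 0}` consists of the positive semidefinite matrices whose range lies in
`ker A = range P`. Testing `E` against the rank-one matrices `u u*` with `u = P v` gives
`P E P ⪰ 0`. Conversely every `F` in the cone satisfies `F = P F P`, so
`Tr(EF) = Tr((P E P) F) ≥ 0` as the trace of a product of two positive semidefinite matrices.
-/

open scoped ComplexOrder MatrixOrder

namespace Matrix

variable {𝕜 m : Type*} [RCLike 𝕜] [Fintype m]

lemma trace_mul_vecMulVec_star (M : Matrix m m 𝕜) (u : m → 𝕜) :
    (M * vecMulVec u (star u)).trace = star u ⬝ᵥ M *ᵥ u := by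
  rw [mul_vecMulVec, trace_vecMulVec, dotProduct_comm]

lemma mul_eq_self_of_range_le_range {P F : Matrix m m 𝕜} (hP : IsIdempotentElem P)
    (hF : LinearMap.range F.mulVecLin ≤ LinearMap.range P.mulVecLin) : P * F = F := by
  refine ext_iff_mulVec.mpr fun v => ?_
  obtain ⟨w, hw⟩ := hF ⟨v, rfl⟩
  rw [mulVecLin_apply, mulVecLin_apply] at hw
  rw [← mulVec_mulVec, ← hw, mulVec_mulVec, hP.eq]

namespace PosSemidef

variable {A B : Matrix m m 𝕜}

lemma trace_mul_nonneg (hA : A.PosSemidef) (hB : B.PosSemidef) : 0 ≤ (A * B).trace := by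
  classical
  obtain ⟨b, rfl⟩ := CStarAlgebra.nonneg_iff_eq_star_mul_self.mp hB.nonneg
  rw [star_eq_conjTranspose, ← mul_assoc, trace_mul_comm]
  simpa only [mul_assoc] using (hA.mul_mul_conjTranspose_same b).trace_nonneg

lemma mul_eq_zero_of_trace_mul_eq_zero (hA : A.PosSemidef) (hB : B.PosSemidef)
    (h : (A * B).trace = 0) : A * B = 0 := by
  classical
  obtain ⟨a, rfl⟩ := CStarAlgebra.nonneg_iff_eq_star_mul_self.mp hA.nonneg
  obtain ⟨b, rfl⟩ := CStarAlgebra.nonneg_iff_eq_star_mul_self.mp hB.nonneg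
  simp only [star_eq_conjTranspose] at h ⊢
  -- `Tr(aᴴa bᴴb) = Tr((a bᴴ)ᴴ (a bᴴ))` is the squared Frobenius norm of `a bᴴ`.
  have hab : a * bᴴ = 0 := by
    rw [← trace_conjTranspose_mul_self_eq_zero_iff, conjTranspose_mul, conjTranspose_conjTranspose,
      ← h, mul_assoc, trace_mul_comm]
    simp only [mul_assoc]
  rw [mul_assoc, ← mul_assoc a, hab]
  simp

end PosSemidef

variable {A P E : Matrix m m 𝕜}

lemma posSemidef_mul_mul_of_forall_re_trace_mul_nonneg (hP : P.IsHermitian) (hE : E.IsHermitian)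
    (hPA : LinearMap.range P.mulVecLin ≤ LinearMap.ker A.mulVecLin)
    (h : ∀ F : Matrix m m 𝕜, F.PosSemidef → (A * F).trace = 0 → 0 ≤ RCLike.re (E * F).trace) :
    (P * E * P).PosSemidef := by
  have hPEP : (P * E * P).IsHermitian := by
    simpa only [hP.eq] using isHermitian_conjTranspose_mul_mul P hE
  refine .of_dotProduct_mulVec_nonneg hPEP fun v => ?_
  set u := P *ᵥ v
  have hAu : A *ᵥ u = 0 := hPA ⟨v, rfl⟩
  have hEu := h (vecMulVec u (star u)) (posSemidef_vecMulVec_self_star u)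
    (by rw [trace_mul_vecMulVec_star, hAu, dotProduct_zero])
  rw [trace_mul_vecMulVec_star] at hEu
  have hquad : star v ⬝ᵥ (P * E * P) *ᵥ v = star u ⬝ᵥ E *ᵥ u := by
    rw [← mulVec_mulVec, ← mulVec_mulVec, dotProduct_mulVec, star_mulVec, hP.eq]
  rw [hquad, RCLike.nonneg_iff]
  exact ⟨hEu, hE.im_star_dotProduct_mulVec_self u⟩

lemma re_trace_mul_nonneg_of_posSemidef_mul_mul (hA : A.PosSemidef) (hP : P.IsHermitian)
    (hPP : IsIdempotentElem P) (hAP : LinearMap.ker A.mulVecLin ≤ LinearMap.range P.mulVecLin)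
    (hPEP : (P * E * P).PosSemidef) {F : Matrix m m 𝕜} (hF : F.PosSemidef)
    (hAF : (A * F).trace = 0) : 0 ≤ RCLike.re (E * F).trace := by
  have hFA : LinearMap.range F.mulVecLin ≤ LinearMap.ker A.mulVecLin := by
    rintro _ ⟨v, rfl⟩
    simp [mulVec_mulVec, hA.mul_eq_zero_of_trace_mul_eq_zero hF hAF]
  have hPF : P * F = F := mul_eq_self_of_range_le_range hPP (hFA.trans hAP)
  have hFP : F * P = F := by
    simpa only [conjTranspose_mul, hP.eq, hF.isHermitian.eq] using congrArg conjTranspose hPF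
  have htrace : (E * F).trace = (P * E * P * F).trace := by
    conv_lhs => rw [← hFP, ← hPF]
    rw [← mul_assoc, ← mul_assoc, trace_mul_comm, ← mul_assoc, ← mul_assoc]
  exact (RCLike.nonneg_iff.mp (htrace ▸ hPEP.trace_mul_nonneg hF)).1

lemma forall_re_trace_mul_nonneg_iff_posSemidef_mul_mul (hA : A.PosSemidef) (hP : P.IsHermitian)
    (hPP : IsIdempotentElem P) (hPA : LinearMap.range P.mulVecLin = LinearMap.ker A.mulVecLin)
    (hE : E.IsHermitian) :
    (∀ F : Matrix m m 𝕜, F.PosSemidef → (A * F).trace = 0 → 0 ≤ RCLike.re (E * F).trace) ↔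
      (P * E * P).PosSemidef :=
  ⟨posSemidef_mul_mul_of_forall_re_trace_mul_nonneg hP hE hPA.le, fun hPEP _ hF hAF =>
    re_trace_mul_nonneg_of_posSemidef_mul_mul hA hP hPP hPA.ge hPEP hF hAF⟩

end Matrix

theorem stmt_4_general {d n : ℕ}
    (η : Fin n → ℝ) (ρ : Fin n → Matrix (Fin d) (Fin d) ℂ)
    (ρ₀ : Matrix (Fin d) (Fin d) ℂ) (x : Fin n) (Cx : ℝ)
    (hCx : IsLeast { q : ℝ | ((q : ℂ) • ρ₀ - (η x : ℂ) • ρ x).PosSemidef } Cx)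
    (Prp : Matrix (Fin d) (Fin d) ℂ)
    (hPrherm : Prp.IsHermitian) (hPridem : Prp * Prp = Prp)
    (hPrrange : LinearMap.range Prp.mulVecLin =
      LinearMap.ker ((Cx : ℂ) • ρ₀ - (η x : ℂ) • ρ x).mulVecLin) :
    { E : Matrix (Fin d) (Fin d) ℂ | E.IsHermitian ∧
        ∀ F : Matrix (Fin d) (Fin d) ℂ, F.PosSemidef →
          (((Cx : ℂ) • ρ₀ - (η x : ℂ) • ρ x) * F).trace = 0 →
          0 ≤ (E * F).trace.re } =
    { E : Matrix (Fin d) (Fin d) ℂ | E.IsHermitian ∧ (Prp * E * Prp).PosSemidef } :=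
  Set.ext fun _ => and_congr_right fun hE =>
    Matrix.forall_re_trace_mul_nonneg_iff_posSemidef_mul_mul hCx.1 hPrherm hPridem hPrrange hE

/-- the dual cone M_x*(E) of M_x(E) = {F ⪰ 0 : Tr[(C_x ρ₀ − η_x ρ_x) F] = 0}
equals {E Hermitian : Π_x^⊥ E Π_x^⊥ ⪰ 0}, with Π_x^⊥ the kernel projection of
C_x ρ₀ − η_x ρ_x. -/
theorem stmt_4 {d n : ℕ} (hd : 0 < d) (hn : 0 < n)
    (η : Fin n → ℝ) (ρ : Fin n → Matrix (Fin d) (Fin d) ℂ)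
    (hη : ∀ i, 0 < η i) (hηsum : ∑ i, η i = 1)
    (hρ : ∀ i, (ρ i).PosSemidef) (hρtr : ∀ i, (ρ i).trace = 1)
    (ρ₀ : Matrix (Fin d) (Fin d) ℂ) (hρ₀ : ρ₀ = ∑ i, (η i : ℂ) • ρ i) (x : Fin n) (Cx : ℝ)
    (hCx : IsLeast { q : ℝ | ((q : ℂ) • ρ₀ - (η x : ℂ) • ρ x).PosSemidef } Cx)
    (Prp : Matrix (Fin d) (Fin d) ℂ)
    (hPrherm : Prp.IsHermitian) (hPridem : Prp * Prp = Prp)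
    (hPrrange : LinearMap.range Prp.mulVecLin =
      LinearMap.ker ((Cx : ℂ) • ρ₀ - (η x : ℂ) • ρ x).mulVecLin) :
    { E : Matrix (Fin d) (Fin d) ℂ | E.IsHermitian ∧
        ∀ F : Matrix (Fin d) (Fin d) ℂ, F.PosSemidef →
          (((Cx : ℂ) • ρ₀ - (η x : ℂ) • ρ x) * F).trace = 0 →
          0 ≤ (E * F).trace.re } =
    { E : Matrix (Fin d) (Fin d) ℂ | E.IsHermitian ∧ (Prp * E * Prp).PosSemidef } :=
  stmt_4_general η ρ ρ₀ x Cx hCx Prp hPrherm hPridem hPrrange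
end

section
/- If q_l ρ₀^l − η_l ρ_l ⪰ 0 for each l = 1,…,L (with all operators positive semidefinite, ρ₀^l and ρ_l states, q_l ≥ 0, η_l > 0), then (∏_l q_l)(⊗_l ρ₀^l) − (∏_l η_l)(⊗_l ρ_l) ⪰ 0. -/
/-! Split `q_l ρ₀^l = X_l + Y_l` with `X_l = q_l ρ₀^l − η_l ρ_l ⪰ 0` and `Y_l = η_l ρ_l ⪰ 0`.
Expanding `⊗_l (X_l + Y_l)` multilinearly, every term other than `⊗_l Y_l` is a tensor product
of positive semidefinite matrices, hence positive semidefinite. -/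

open Matrix BigOperators
open scoped ComplexOrder

/-- L-fold tensor (Kronecker) product of square complex matrices, realized on the
index type ∀ l, Fin (d l). -/
def tens {L : ℕ} {d : Fin L → ℕ}
    (X : ∀ l, Matrix (Fin (d l)) (Fin (d l)) ℂ) :
    Matrix (∀ l, Fin (d l)) (∀ l, Fin (d l)) ℂ :=
  Matrix.of fun a b => ∏ l, X l (a l) (b l)

section Tensor

variable {L : ℕ} {d : Fin L → ℕ}

lemma tens_mul (X Y : ∀ l, Matrix (Fin (d l)) (Fin (d l)) ℂ) :
    tens (fun l => X l * Y l) = tens X * tens Y := by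
  ext a b
  simp only [tens, of_apply, mul_apply, Finset.prod_univ_sum, Fintype.piFinset_univ,
    Finset.prod_mul_distrib]

lemma tens_conjTranspose (X : ∀ l, Matrix (Fin (d l)) (Fin (d l)) ℂ) :
    tens (fun l => (X l)ᴴ) = (tens X)ᴴ := by
  ext a b
  simp [tens, conjTranspose_apply]

lemma tens_smul (c : Fin L → ℂ) (X : ∀ l, Matrix (Fin (d l)) (Fin (d l)) ℂ) :
    tens (fun l => c l • X l) = (∏ l, c l) • tens X := by
  ext a b
  simp only [tens, of_apply, Matrix.smul_apply, smul_eq_mul, Finset.prod_mul_distrib]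

lemma tens_add (X Y : ∀ l, Matrix (Fin (d l)) (Fin (d l)) ℂ) :
    tens (X + Y) = ∑ t : Finset (Fin L), tens (t.piecewise X Y) := by
  classical
  ext a b
  simp only [tens, of_apply, Matrix.sum_apply, Pi.add_apply, Matrix.add_apply, Fintype.prod_add]
  refine Finset.sum_congr rfl fun t _ => ?_
  rw [← Finset.prod_mul_prod_compl t]
  congr 1 <;> refine Finset.prod_congr rfl fun l hl => ?_
  · rw [Finset.piecewise_eq_of_mem _ _ _ hl]
  · rw [Finset.piecewise_eq_of_notMem _ _ _ (Finset.mem_compl.mp hl)]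

/-- Each `X l` is `Bᴴ * B`, so `tens X = (tens B)ᴴ * tens B`. -/
lemma posSemidef_tens {X : ∀ l, Matrix (Fin (d l)) (Fin (d l)) ℂ}
    (hX : ∀ l, (X l).PosSemidef) : (tens X).PosSemidef := by
  open scoped MatrixOrder in
  choose B hB using fun l => CStarAlgebra.nonneg_iff_eq_star_mul_self.mp (hX l).nonneg
  rw [show X = fun l => (B l)ᴴ * B l from funext hB, tens_mul, tens_conjTranspose]
  exact posSemidef_conjTranspose_mul_self _

lemma posSemidef_tens_add_sub_tens {X Y : ∀ l, Matrix (Fin (d l)) (Fin (d l)) ℂ}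
    (hX : ∀ l, (X l).PosSemidef) (hY : ∀ l, (Y l).PosSemidef) :
    (tens (X + Y) - tens Y).PosSemidef := by
  classical
  rw [tens_add, ← Finset.add_sum_erase _ _ (Finset.mem_univ ∅), Finset.piecewise_empty,
    add_sub_cancel_left]
  exact posSemidef_sum _ fun t _ => posSemidef_tens fun l =>
    t.piecewise_cases X Y PosSemidef (hX l) (hY l)

end Tensor

theorem stmt_13_general {L : ℕ} {d : Fin L → ℕ}
    (ρ₀ ρ : ∀ l, Matrix (Fin (d l)) (Fin (d l)) ℂ)
    (hρ : ∀ l, (ρ l).PosSemidef)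
    (q η : Fin L → ℝ) (hη : ∀ l, 0 < η l)
    (hpos : ∀ l, ((q l : ℂ) • ρ₀ l - (η l : ℂ) • ρ l).PosSemidef) :
    (((∏ l, q l : ℝ) : ℂ) • tens ρ₀ - ((∏ l, η l : ℝ) : ℂ) • tens ρ).PosSemidef := by
  have hηρ : ∀ l, ((η l : ℂ) • ρ l).PosSemidef := fun l =>
    (hρ l).smul (Complex.zero_le_real.mpr (hη l).le)
  have key := posSemidef_tens_add_sub_tens hpos hηρ
  simp only [Complex.ofReal_prod, ← tens_smul]
  simpa only [Pi.add_def, sub_add_cancel] using key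

/-- if q_l ρ₀^l − η_l ρ_l ⪰ 0 for each l, then
(∏ q_l) ⊗_l ρ₀^l − (∏ η_l) ⊗_l ρ_l ⪰ 0. -/
theorem stmt_13 {L : ℕ} (hL : 0 < L) {d : Fin L → ℕ} (hd : ∀ l, 0 < d l)
    (ρ₀ ρ : ∀ l, Matrix (Fin (d l)) (Fin (d l)) ℂ)
    (hρ₀ : ∀ l, (ρ₀ l).PosSemidef) (hρ₀tr : ∀ l, (ρ₀ l).trace = 1)
    (hρ : ∀ l, (ρ l).PosSemidef) (hρtr : ∀ l, (ρ l).trace = 1)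
    (q η : Fin L → ℝ) (hq : ∀ l, 0 ≤ q l) (hη : ∀ l, 0 < η l)
    (hpos : ∀ l, ((q l : ℂ) • ρ₀ l - (η l : ℂ) • ρ l).PosSemidef) :
    (((∏ l, q l : ℝ) : ℂ) • tens ρ₀ - ((∏ l, η l : ℝ) : ℂ) • tens ρ).PosSemidef :=
  stmt_13_general ρ₀ ρ hρ q η hη hpos
end
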